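/- Let f : ℝ^n → ℝ be continuous, P_0 : ℝ^n → [0, ∞] proper closed with f + P_0 level-bounded (i.e., {x : f(x) + P_0(x) ≤ r} is bounded for every r ∈ ℝ), and for i = 1,…,m let A_i : ℝ^n → ℝ^{n_i} be linear and P_i : ℝ^{n_i} → [0, ∞] proper closed with dom P_i closed. For positive parameters λ = (λ_1,…,λ_m) define F_λ(x) := f(x) + P_0(x) + Σ_{i=1}^m e_{λ_i} P_i(A_i x). Suppose λ_{i,t} > 0 with λ_{i,t} → 0 for each i, C ∈ ℝ, and {x^t} ⊂ ℝ^n satisfies F_{λ_t}(x^t) ≤ C for all t, where λ_t = (λ_{1,t},…,λ_{m,t}). Then {x^t} is bounded, and every accumulation point x* of {x^t} satisfies x* ∈ dom P_0 and A_i x* ∈ dom P_i for all i = 1,…,m. -/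

import Mathlib

/-!
The Moreau envelopes are nonnegative, so `F_λ(x^t) ≤ C` puts every `x^t` in the sublevel set
`{f + P₀ ≤ C}`, which is bounded. On the compact closure of `{x^t}` the continuous `f` is bounded
below by some `M`, hence `P₀(x^t)` and each `e_{λ_{i,t}} P_i(A_i x^t)` stay below `C - M`. Lower
semicontinuity passes the first bound to any cluster point `x*`. For the second, `e_λ h(z) < B`
yields `y ∈ dom h` with `‖z - y‖² ≤ 2λB`, so `A_i x^t` approaches the closed set `dom P_i` as
`λ_{i,t} → 0`, and its cluster point `A_i x*` lies in it.
-/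

open Filter Topology

/-- The Moreau envelope `e_λ h(x) = inf_y { (1/(2λ))‖x − y‖² + h(y) }`. -/
noncomputable def mEnv {d : ℕ} (h : EuclideanSpace ℝ (Fin d) → EReal) (lam : ℝ)
    (x : EuclideanSpace ℝ (Fin d)) : EReal :=
  ⨅ y, (((1 / (2 * lam)) * ‖x - y‖ ^ 2 : ℝ) : EReal) + h y

theorem EReal.le_coe_sub_of_coe_add_le {a c : ℝ} {b : EReal} (h : (a : EReal) + b ≤ c) :
    b ≤ ((c - a : ℝ) : EReal) := by
  rw [EReal.coe_sub, EReal.le_sub_iff_add_le (.inl (EReal.coe_ne_bot a))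
    (.inl (EReal.coe_ne_top a)), add_comm]
  exact h

theorem LowerSemicontinuous.le_of_mapClusterPt {α β ι : Type*} [TopologicalSpace α]
    [LinearOrder β] {g : α → β} (hg : LowerSemicontinuous g) {l : Filter ι} {u : ι → α} {z : α}
    (hz : MapClusterPt z l u) {K : β} (hK : ∀ t, g (u t) ≤ K) : g z ≤ K := by
  by_contra! hlt
  obtain ⟨t, ht⟩ := (hz.frequently (hg z K hlt)).exists
  exact (hK t).not_gt ht

theorem mem_of_mapClusterPt_of_dist_le {E ι : Type*} [PseudoMetricSpace E] {s : Set E}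
    (hs : IsClosed s) {l : Filter ι} {u : ι → E} {z : E} (hz : MapClusterPt z l u)
    {ε : ι → ℝ} (hε : Tendsto ε l (𝓝 0)) (hu : ∀ t, ∃ y ∈ s, dist (u t) y ≤ ε t) :
    z ∈ s := by
  refine hs.closure_subset (Metric.mem_closure_iff.2 fun δ hδ => ?_)
  have hnear : ∀ᶠ t in l, ε t < δ / 2 := hε.eventually (gt_mem_nhds (half_pos hδ))
  obtain ⟨t, hut, hεt⟩ :=
    ((hz.frequently (Metric.ball_mem_nhds z (half_pos hδ))).and_eventually hnear).exists
  obtain ⟨y, hys, hy⟩ := hu t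
  refine ⟨y, hys, ?_⟩
  calc dist z y ≤ dist z (u t) + dist (u t) y := dist_triangle _ _ _
    _ < δ / 2 + δ / 2 := add_lt_add_of_lt_of_le (by rwa [dist_comm]) (hy.trans hεt.le)
    _ = δ := add_halves δ

section MoreauEnvelope

variable {d : ℕ} {h : EuclideanSpace ℝ (Fin d) → EReal} {lam : ℝ}

theorem mEnv_nonneg (hh : ∀ y, 0 ≤ h y) (hlam : 0 ≤ lam) (x : EuclideanSpace ℝ (Fin d)) :
    0 ≤ mEnv h lam x :=
  le_iInf fun y => add_nonneg (EReal.coe_nonneg.2 (by positivity)) (hh y)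

theorem exists_dist_le_of_mEnv_lt (hh : ∀ y, 0 ≤ h y) (hlam : 0 < lam)
    {x : EuclideanSpace ℝ (Fin d)} {B : ℝ} (hB : mEnv h lam x < B) :
    ∃ y, h y ≠ ⊤ ∧ dist x y ≤ √(2 * lam * B) := by
  obtain ⟨y, hy⟩ := iInf_lt_iff.1 hB
  have hyfin : h y ≠ ⊤ := by
    rintro htop
    rw [htop, EReal.coe_add_top] at hy
    exact not_top_lt hy
  refine ⟨y, hyfin, ?_⟩
  have hq : 1 / (2 * lam) * ‖x - y‖ ^ 2 < B :=
    EReal.coe_lt_coe_iff.1 ((le_add_of_nonneg_right (hh y)).trans_lt hy)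
  rw [dist_eq_norm, ← Real.sqrt_sq (norm_nonneg _)]
  refine Real.sqrt_le_sqrt ?_
  rw [one_div, inv_mul_lt_iff₀ (by positivity)] at hq
  exact hq.le

end MoreauEnvelope

theorem bounded_and_feasible_accumulation_general {n m : ℕ} {ni : Fin m → ℕ}
    (f : EuclideanSpace ℝ (Fin n) → ℝ) (hf : Continuous f)
    (P0 : EuclideanSpace ℝ (Fin n) → EReal)
    (hP0nn : ∀ x, 0 ≤ P0 x)
    (hP0closed : LowerSemicontinuous P0)
    (hlevel : ∀ r : ℝ, Bornology.IsBounded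
      {x : EuclideanSpace ℝ (Fin n) | (f x : EReal) + P0 x ≤ (r : EReal)})
    (A : (i : Fin m) → EuclideanSpace ℝ (Fin n) →L[ℝ] EuclideanSpace ℝ (Fin (ni i)))
    (P : (i : Fin m) → EuclideanSpace ℝ (Fin (ni i)) → EReal)
    (hPnn : ∀ i y, 0 ≤ P i y)
    (hPdom : ∀ i, IsClosed {y | P i y ≠ ⊤})
    (lam : Fin m → ℕ → ℝ) (hlampos : ∀ i t, 0 < lam i t)
    (hlam : ∀ i, Tendsto (lam i) atTop (𝓝 0))
    (C : ℝ) (x : ℕ → EuclideanSpace ℝ (Fin n))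
    (hC : ∀ t, (f (x t) : EReal) + P0 (x t) +
      ∑ i, mEnv (P i) (lam i t) (A i (x t)) ≤ (C : EReal)) :
    Bornology.IsBounded (Set.range x) ∧
    ∀ xstar, MapClusterPt xstar atTop x →
      P0 xstar ≠ ⊤ ∧ ∀ i, P i (A i xstar) ≠ ⊤ := by
  set env : Fin m → ℕ → EReal := fun i t => mEnv (P i) (lam i t) (A i (x t))
  have henv : ∀ i t, 0 ≤ env i t := fun i t => mEnv_nonneg (hPnn i) (hlampos i t).le _
  have hbdd : Bornology.IsBounded (Set.range x) := (hlevel C).subset <| Set.range_subset_iff.2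
    fun t => (le_add_of_nonneg_right (Finset.sum_nonneg fun i _ => henv i t)).trans (hC t)
  obtain ⟨M, hM⟩ := hbdd.isCompact_closure.bddBelow_image hf.continuousOn
  have hbound : ∀ t, P0 (x t) + ∑ i, env i t ≤ ((C - M : ℝ) : EReal) := fun t =>
    (EReal.le_coe_sub_of_coe_add_le ((add_assoc _ _ _).symm.trans_le (hC t))).trans <|
      EReal.coe_le_coe_iff.2 <| sub_le_sub_left (hM ⟨x t, subset_closure ⟨t, rfl⟩, rfl⟩) C
  refine ⟨hbdd, fun xstar hx => ⟨?_, fun i => ?_⟩⟩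
  · refine ne_top_of_le_ne_top (EReal.coe_ne_top (C - M)) (hP0closed.le_of_mapClusterPt hx ?_)
    exact fun t => (le_add_of_nonneg_right (Finset.sum_nonneg fun i _ => henv i t)).trans (hbound t)
  · have henv_lt : ∀ t, env i t < ((C - M + 1 : ℝ) : EReal) := fun t =>
      ((Finset.single_le_sum (fun j _ => henv j t) (Finset.mem_univ i)).trans
        ((le_add_of_nonneg_left (hP0nn _)).trans (hbound t))).trans_lt
        (EReal.coe_lt_coe_iff.2 (lt_add_one _))
    have hε : Tendsto (fun t => √(2 * lam i t * (C - M + 1))) atTop (𝓝 0) := by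
      simpa using (((hlam i).const_mul 2).mul_const (C - M + 1)).sqrt
    exact mem_of_mapClusterPt_of_dist_le (hPdom i)
      (hx.continuousAt_comp (A i).continuous.continuousAt) hε
      fun t => exists_dist_le_of_mEnv_lt (hPnn i) (hlampos i t) (henv_lt t)

/-- Let `f` be continuous, `P_0` proper closed nonnegative with `f + P_0`
level-bounded, `A_i` linear and `P_i` proper closed nonnegative with closed
domains.  If `λ_{i,t} > 0`, `λ_{i,t} → 0` and
`F_{λ_t}(x^t) = f(x^t) + P_0(x^t) + Σ_i e_{λ_{i,t}} P_i(A_i x^t) ≤ C` for all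
`t`, then `{x^t}` is bounded and every accumulation point `x*` satisfies
`x* ∈ dom P_0` and `A_i x* ∈ dom P_i` for all `i`. -/
theorem bounded_and_feasible_accumulation {n m : ℕ} {ni : Fin m → ℕ}
    (f : EuclideanSpace ℝ (Fin n) → ℝ) (hf : Continuous f)
    (P0 : EuclideanSpace ℝ (Fin n) → EReal)
    (hP0nn : ∀ x, 0 ≤ P0 x) (hP0proper : ∃ x, P0 x ≠ ⊤)
    (hP0closed : LowerSemicontinuous P0)
    (hlevel : ∀ r : ℝ, Bornology.IsBounded
      {x : EuclideanSpace ℝ (Fin n) | (f x : EReal) + P0 x ≤ (r : EReal)})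
    (A : (i : Fin m) → EuclideanSpace ℝ (Fin n) →L[ℝ] EuclideanSpace ℝ (Fin (ni i)))
    (P : (i : Fin m) → EuclideanSpace ℝ (Fin (ni i)) → EReal)
    (hPnn : ∀ i y, 0 ≤ P i y) (hPproper : ∀ i, ∃ y, P i y ≠ ⊤)
    (hPclosed : ∀ i, LowerSemicontinuous (P i))
    (hPdom : ∀ i, IsClosed {y | P i y ≠ ⊤})
    (lam : Fin m → ℕ → ℝ) (hlampos : ∀ i t, 0 < lam i t)
    (hlam : ∀ i, Tendsto (lam i) atTop (𝓝 0))
    (C : ℝ) (x : ℕ → EuclideanSpace ℝ (Fin n))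
    (hC : ∀ t, (f (x t) : EReal) + P0 (x t) +
      ∑ i, mEnv (P i) (lam i t) (A i (x t)) ≤ (C : EReal)) :
    Bornology.IsBounded (Set.range x) ∧
    ∀ xstar, MapClusterPt xstar atTop x →
      P0 xstar ≠ ⊤ ∧ ∀ i, P i (A i xstar) ≠ ⊤ :=
  bounded_and_feasible_accumulation_general f hf P0 hP0nn hP0closed hlevel A P hPnn hPdom lam
    hlampos hlam C x hC
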